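/- Let K ≥ 1 be an integer and κ > 1 a real number. For i = 1, …, K+2 set β_i := cos((i−1)π/(K+1)) and λ_i := (κ−1)(β_i + 1)/2 + 1, so that κ = λ_1 > λ_2 > ⋯ > λ_{K+2} = 1. Set x₀ := 1 + 2/(κ−1). Then for every real polynomial P of degree at most K, max_{1 ≤ i ≤ K+2} |1/λ_i − P(λ_i)| ≥ 1 / (κ · (x₀ + √(x₀² − 1))^{K+1}). -/

import Mathlib

set_option maxHeartbeats 1000000

open Polynomial Finset

lemma chebT_natDegree_le : ∀ m : ℕ, (Polynomial.Chebyshev.T ℝ (m : ℤ)).natDegree ≤ m := by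
  intro m
  induction m using Nat.strong_induction_on with
  | _ m ih =>
    match m with
    | 0 => simp [Polynomial.Chebyshev.T_zero]
    | 1 => simp [Polynomial.Chebyshev.T_one]
    | (m+2) =>
      have h1 : (Polynomial.Chebyshev.T ℝ ((m:ℤ)+1)).natDegree ≤ m+1 := by
        have := ih (m+1) (by omega); push_cast at this; exact this
      have h0 : (Polynomial.Chebyshev.T ℝ (m:ℤ)).natDegree ≤ m := ih m (by omega)
      have e : ((m + 2 : ℕ) : ℤ) = (m : ℤ) + 2 := by push_cast; ring
      rw [e, Polynomial.Chebyshev.T_add_two]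
      refine le_trans (natDegree_sub_le _ _) ?_
      rw [max_le_iff]
      constructor
      · refine le_trans natDegree_mul_le ?_
        have h2 : (2 * X : ℝ[X]).natDegree ≤ 1 := by
          refine le_trans natDegree_mul_le ?_
          simp
        omega
      · omega


/-- The rescaled Chebyshev extremal points `λ_i = (κ−1)(cos((i−1)π/(K+1)) + 1)/2 + 1`. -/
noncomputable def chebNode (K : ℕ) (κ : ℝ) (i : ℕ) : ℝ :=
  (κ - 1) * (Real.cos (((i : ℝ) - 1) * Real.pi / ((K : ℝ) + 1)) + 1) / 2 + 1

/-- `x₀ = 1 + 2/(κ−1)`. -/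
noncomputable def chebX0 (κ : ℝ) : ℝ := 1 + 2 / (κ - 1)

/-- For every real polynomial `P` of degree at most `K`,
`max_{1 ≤ i ≤ K+2} |1/λ_i − P(λ_i)| ≥ 1 / (κ (x₀ + √(x₀² − 1))^{K+1})`. -/
theorem stmt_11 (K : ℕ) (hK : 1 ≤ K) (κ : ℝ) (hκ : 1 < κ)
    (P : Polynomial ℝ) (hP : P.natDegree ≤ K) :
    ∃ i ∈ Finset.Icc 1 (K + 2),
      1 / (κ * (chebX0 κ + Real.sqrt ((chebX0 κ) ^ 2 - 1)) ^ (K + 1)) ≤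
        |1 / chebNode K κ i - P.eval (chebNode K κ i)| := by
  by_contra hcon
  push_neg at hcon
  set x : ℝ := chebX0 κ with hxdef
  have hκ1 : (0:ℝ) < κ - 1 := by linarith
  have hκ1' : κ - 1 ≠ 0 := ne_of_gt hκ1
  have hxe : x = 1 + 2 / (κ - 1) := rfl
  have hx1 : 1 < x := by
    have : 0 < 2 / (κ - 1) := by positivity
    linarith [hxe]
  have hx2 : 0 ≤ x ^ 2 - 1 := by nlinarith
  set sq : ℝ := Real.sqrt (x ^ 2 - 1) with hsqdef
  have hsq0 : 0 ≤ sq := Real.sqrt_nonneg _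
  have hsq2 : sq ^ 2 = x ^ 2 - 1 := Real.sq_sqrt hx2
  set t : ℝ := x + sq with htdef
  have ht1 : 1 < t := by linarith
  have ht0 : 0 < t := by linarith
  have htp : 0 < t ^ (K + 1) := pow_pos ht0 _
  have htinv : t⁻¹ = x - sq := by
    have h : (x - sq) * t = 1 := by nlinarith
    exact (eq_inv_of_mul_eq_one_left h).symm
  have hnpos : (0:ℝ) < (K:ℝ) + 1 := by positivity
  set v : ℕ → ℝ := fun j => Real.cos ((j : ℝ) * Real.pi / ((K:ℝ) + 1)) with hv
  set s : Finset ℕ := Finset.range (K + 2) with hs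
  have hcard : s.card = K + 2 := Finset.card_range _
  have hsne : s.Nonempty := by rw [hs]; exact Finset.nonempty_range_iff.mpr (by omega)
  have hangle : ∀ j ∈ s, 0 ≤ (j:ℝ) * Real.pi / ((K:ℝ)+1) ∧
      (j:ℝ) * Real.pi / ((K:ℝ)+1) ≤ Real.pi := by
    intro j hj
    rw [hs, Finset.mem_range] at hj
    have hjle : (j:ℝ) ≤ (K:ℝ) + 1 := by exact_mod_cast Nat.lt_succ_iff.mp hj
    have hπ := Real.pi_pos
    constructor
    · positivity
    · rw [div_le_iff₀ hnpos]; nlinarith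
  have hanti : ∀ a ∈ s, ∀ b ∈ s, a < b → v b < v a := by
    intro a ha b hb hab
    apply Real.cos_lt_cos_of_nonneg_of_le_pi (hangle a ha).1 (hangle b hb).2
    have hab' : (a:ℝ) < (b:ℝ) := by exact_mod_cast hab
    have hπ := Real.pi_pos
    gcongr
  have hinj : Set.InjOn v ↑s := by
    intro p hp q hq hpq
    by_contra hne
    rcases Nat.lt_or_ge p q with h | h
    · exact (hanti p (Finset.mem_coe.mp hp) q (Finset.mem_coe.mp hq) h).ne' hpq
    · have h' : q < p := by omega
      exact (hanti q (Finset.mem_coe.mp hq) p (Finset.mem_coe.mp hp) h').ne' hpq.symm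
  have hv1 : ∀ j ∈ s, -1 ≤ v j := fun j _ => Real.neg_one_le_cos _
  have hv2 : ∀ j ∈ s, v j ≤ 1 := fun j _ => Real.cos_le_one _
  have hvx : ∀ j ∈ s, v j < x := fun j hj => lt_of_le_of_lt (hv2 j hj) hx1
  set a : ℝ := -(κ - 1) / 2 with ha
  set b : ℝ := (κ + 1) / 2 with hb
  set Q : Polynomial ℝ := (Polynomial.X * P - 1).comp (Polynomial.C a * Polynomial.X + Polynomial.C b) with hQ
  have hQeval : ∀ y : ℝ, Q.eval y = (a * y + b) * P.eval (a * y + b) - 1 := by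
    intro y; simp [hQ]
  have hμx : a * x + b = 0 := by
    rw [ha, hb, hxe]; field_simp; ring
  have hQx : Q.eval x = -1 := by rw [hQeval, hμx]; simp
  -- degree of Q
  have hQdeg : Q.degree < (s.card : WithBot ℕ) := by
    have h1 : (Polynomial.X * P - 1).natDegree ≤ K + 1 := by
      refine le_trans (natDegree_sub_le _ _) ?_
      rw [max_le_iff]
      refine ⟨le_trans natDegree_mul_le ?_, by simp⟩
      simp only [natDegree_X]; omega
    have h2 : (Polynomial.C a * Polynomial.X + Polynomial.C b).natDegree ≤ 1 := by
      refine le_trans (natDegree_add_le _ _) ?_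
      rw [max_le_iff]
      refine ⟨le_trans (natDegree_C_mul_le _ _) ?_, by simp⟩
      simp
    have h3 : Q.natDegree ≤ (K+1) * 1 := le_trans natDegree_comp_le (Nat.mul_le_mul h1 h2)
    have h4 : Q.natDegree < K + 2 := by omega
    calc Q.degree ≤ (Q.natDegree : WithBot ℕ) := degree_le_natDegree
      _ < ((K + 2 : ℕ) : WithBot ℕ) := by exact_mod_cast h4
      _ = (s.card : WithBot ℕ) := by rw [hcard]
  -- node identification
  have hnode : ∀ j ∈ s, chebNode K κ (K + 2 - j) = a * v j + b := by
    intro j hj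
    rw [hs, Finset.mem_range] at hj
    have hjle : j ≤ K + 2 := by omega
    have hcast : ((K + 2 - j : ℕ) : ℝ) = (K : ℝ) + 2 - (j : ℝ) := by
      push_cast [Nat.cast_sub hjle]; ring
    unfold chebNode
    rw [hcast]
    have hangle2 : ((K:ℝ) + 2 - (j:ℝ) - 1) * Real.pi / ((K:ℝ)+1)
        = Real.pi - (j:ℝ) * Real.pi / ((K:ℝ)+1) := by
      field_simp; ring
    rw [hangle2, Real.cos_pi_sub]
    have hvj : Real.cos ((j:ℝ) * Real.pi / ((K:ℝ)+1)) = v j := rfl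
    rw [hvj, ha, hb]; ring
  have hlam : ∀ j ∈ s, 1 ≤ a * v j + b ∧ a * v j + b ≤ κ := by
    intro j hj
    have h1 := hv1 j hj; have h2 := hv2 j hj
    rw [ha, hb]
    constructor <;> nlinarith
  -- bound on |Q (v j)|
  have hQb : ∀ j ∈ s, |Q.eval (v j)| < 1 / t ^ (K + 1) := by
    intro j hj
    have hmem : K + 2 - j ∈ Finset.Icc 1 (K + 2) := by
      rw [Finset.mem_Icc]
      have : j ∈ Finset.range (K+2) := by rw [← hs]; exact hj
      rw [Finset.mem_range] at this; omega
    have hlt := hcon (K + 2 - j) hmem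
    rw [hnode j hj] at hlt
    obtain ⟨hl1, hl2⟩ := hlam j hj
    have hlpos : 0 < a * v j + b := by linarith
    have hQv : Q.eval (v j) = (a * v j + b) * P.eval (a * v j + b) - 1 := hQeval (v j)
    have e1 : (a * v j + b) * (1 / (a * v j + b) - P.eval (a * v j + b))
        = 1 - (a * v j + b) * P.eval (a * v j + b) := by
      field_simp
    have key : |Q.eval (v j)| = (a * v j + b) * |1 / (a * v j + b) - P.eval (a * v j + b)| := by
      rw [hQv, abs_sub_comm, ← e1, abs_mul, abs_of_pos hlpos]
    rw [key]
    calc (a * v j + b) * |1 / (a * v j + b) - P.eval (a * v j + b)|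
        < (a * v j + b) * (1 / (κ * t ^ (K+1))) := by
          exact mul_lt_mul_of_pos_left hlt hlpos
      _ ≤ κ * (1 / (κ * t ^ (K+1))) := by
          apply mul_le_mul_of_nonneg_right hl2
          positivity
      _ = 1 / t ^ (K+1) := by field_simp
  -- Lagrange interpolation of Q
  have hQint : Q = Lagrange.interpolate s v fun i => Q.eval (v i) :=
    Lagrange.eq_interpolate hinj hQdeg
  have hsum : Q.eval x = ∑ j ∈ s, Q.eval (v j) * (Lagrange.basis s v j).eval x := by
    conv_lhs => rw [hQint]
    rw [Lagrange.interpolate_apply, Polynomial.eval_finset_sum]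
    exact Finset.sum_congr rfl fun j hj => by rw [Polynomial.eval_mul, Polynomial.eval_C]
  -- sign and nonvanishing of the basis values
  have hbasis_eval : ∀ j ∈ s, (Lagrange.basis s v j).eval x
      = ∏ m ∈ s.erase j, ((v j - v m)⁻¹ * (x - v m)) := by
    intro j hj
    rw [Lagrange.basis, Polynomial.eval_prod]
    exact Finset.prod_congr rfl fun m hm => by simp [Lagrange.basisDivisor]
  have hsign : ∀ j ∈ s, |(Lagrange.basis s v j).eval x| = (-1:ℝ)^j * (Lagrange.basis s v j).eval x
      ∧ (Lagrange.basis s v j).eval x ≠ 0 := by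
    intro j hj
    have hgsign : ∀ m ∈ s.erase j,
        (v j - v m)⁻¹ * (x - v m) = (if m < j then (-1:ℝ) else 1) * |(v j - v m)⁻¹ * (x - v m)| := by
      intro m hm
      rw [Finset.mem_erase] at hm
      obtain ⟨hmj, hms⟩ := hm
      have hxm : 0 < x - v m := sub_pos.mpr (hvx m hms)
      rcases Nat.lt_or_ge m j with h | h
      · have hvv : v j < v m := hanti m hms j hj h
        have hneg0 : (v j - v m)⁻¹ < 0 := inv_lt_zero.mpr (sub_neg.mpr hvv)
        have hneg : (v j - v m)⁻¹ * (x - v m) < 0 := mul_neg_of_neg_of_pos hneg0 hxm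
        rw [if_pos h, abs_of_neg hneg]; ring
      · have h' : j < m := by omega
        have hvv : v m < v j := hanti j hj m hms h'
        have hpos0 : 0 < (v j - v m)⁻¹ := inv_pos.mpr (sub_pos.mpr hvv)
        have hpos : 0 < (v j - v m)⁻¹ * (x - v m) := mul_pos hpos0 hxm
        rw [if_neg (by omega), abs_of_pos hpos]
        ring
    have hprod : ∏ m ∈ s.erase j, ((v j - v m)⁻¹ * (x - v m))
        = (∏ m ∈ s.erase j, (if m < j then (-1:ℝ) else 1))
          * ∏ m ∈ s.erase j, |(v j - v m)⁻¹ * (x - v m)| := by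
      rw [← Finset.prod_mul_distrib]
      exact Finset.prod_congr rfl hgsign
    have hfilter : (s.erase j).filter (· < j) = Finset.range j := by
      have hjK : j < K + 2 := by
        have : j ∈ Finset.range (K+2) := by rw [← hs]; exact hj
        rwa [Finset.mem_range] at this
      ext m
      simp only [Finset.mem_filter, Finset.mem_erase, hs, Finset.mem_range]
      omega
    have hcardf : (∏ m ∈ s.erase j, (if m < j then (-1:ℝ) else 1)) = (-1:ℝ)^j := by
      rw [Finset.prod_ite, Finset.prod_const, Finset.prod_const, hfilter, Finset.card_range]
      simp
    have hne : (Lagrange.basis s v j).eval x ≠ 0 := by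
      rw [hbasis_eval j hj]
      rw [Finset.prod_ne_zero_iff]
      intro m hm
      rw [Finset.mem_erase] at hm
      obtain ⟨hmj, hms⟩ := hm
      have hvne : v j ≠ v m := fun h => hmj.symm (hinj (Finset.mem_coe.mpr hj) (Finset.mem_coe.mpr hms) h)
      exact mul_ne_zero (inv_ne_zero (sub_ne_zero.mpr hvne)) (ne_of_gt (sub_pos.mpr (hvx m hms)))
    refine ⟨?_, hne⟩
    have hsq1 : (-1:ℝ)^j * (-1:ℝ)^j = 1 := by
      rw [← pow_add]
      exact Even.neg_one_pow ⟨j, rfl⟩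
    have habs : |(Lagrange.basis s v j).eval x| = ∏ m ∈ s.erase j, |(v j - v m)⁻¹ * (x - v m)| := by
      rw [hbasis_eval j hj, Finset.abs_prod]
    rw [habs, hbasis_eval j hj, hprod, hcardf, ← mul_assoc, hsq1, one_mul]
  -- the Chebyshev polynomial interpolates (-1)^j
  have hTdeg : (Polynomial.Chebyshev.T ℝ ((K+1 : ℕ) : ℤ)).degree < (s.card : WithBot ℕ) := by
    have h := chebT_natDegree_le (K+1)
    calc (Polynomial.Chebyshev.T ℝ ((K+1 : ℕ) : ℤ)).degree
        ≤ ((Polynomial.Chebyshev.T ℝ ((K+1 : ℕ) : ℤ)).natDegree : WithBot ℕ) := degree_le_natDegree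
      _ < ((K + 2 : ℕ) : WithBot ℕ) := by exact_mod_cast Nat.lt_succ_of_le h
      _ = (s.card : WithBot ℕ) := by rw [hcard]
  have hTeq : Polynomial.Chebyshev.T ℝ ((K+1 : ℕ) : ℤ) = Lagrange.interpolate s v (fun j => (-1:ℝ)^j) := by
    apply Lagrange.eq_interpolate_of_eval_eq (fun j => (-1:ℝ)^j) hinj hTdeg
    intro j hj
    have hvj : v j = Real.cos ((j:ℝ) * Real.pi / ((K:ℝ)+1)) := rfl
    rw [hvj, Polynomial.Chebyshev.T_real_cos]
    have harg : (((K+1 : ℕ) : ℤ) : ℝ) * ((j:ℝ) * Real.pi / ((K:ℝ)+1)) = (j:ℝ) * Real.pi - 0 := by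
      push_cast
      field_simp
      ring
    rw [harg, Real.cos_nat_mul_pi_sub]
    simp
  have hsumabs : ∑ j ∈ s, |(Lagrange.basis s v j).eval x|
      = (Polynomial.Chebyshev.T ℝ ((K+1 : ℕ) : ℤ)).eval x := by
    rw [hTeq, Lagrange.interpolate_apply, Polynomial.eval_finset_sum]
    exact Finset.sum_congr rfl fun j hj => by
      rw [Polynomial.eval_mul, Polynomial.eval_C, (hsign j hj).1]
  -- growth bound
  have hcosh : (Polynomial.Chebyshev.T ℝ ((K+1 : ℕ) : ℤ)).eval x ≤ t ^ (K+1) := by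
    set u : ℝ := Real.log t with hu
    have hu0 : 0 < u := Real.log_pos ht1
    have hcoshu : Real.cosh u = x := by
      rw [Real.cosh_eq, Real.exp_log ht0, Real.exp_neg, Real.exp_log ht0, htinv, htdef]
      ring
    have hval : (Polynomial.Chebyshev.T ℝ ((K+1 : ℕ) : ℤ)).eval x = Real.cosh (((K:ℝ)+1) * u) := by
      have h1 : ((( Polynomial.Chebyshev.T ℝ ((K+1 : ℕ) : ℤ)).eval x : ℝ) : ℂ)
          = (Polynomial.Chebyshev.T ℂ ((K+1 : ℕ) : ℤ)).eval (x:ℂ) :=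
        Polynomial.Chebyshev.complex_ofReal_eval_T x _
      have h2 : (x:ℂ) = Complex.cos ((u:ℂ) * Complex.I) := by
        rw [Complex.cos_mul_I, ← Complex.ofReal_cosh, hcoshu]
      rw [h2, Polynomial.Chebyshev.T_complex_cos] at h1
      have h3 : (((K+1 : ℕ) : ℤ) : ℂ) * ((u:ℂ) * Complex.I) = ((((K:ℝ)+1) * u : ℝ) : ℂ) * Complex.I := by
        push_cast; ring
      rw [h3, Complex.cos_mul_I, ← Complex.ofReal_cosh] at h1
      exact_mod_cast h1
    rw [hval]
    have hle : Real.cosh (((K:ℝ)+1) * u) ≤ Real.exp (((K:ℝ)+1) * u) := by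
      rw [Real.cosh_eq]
      have h5 : Real.exp (-(((K:ℝ)+1) * u)) ≤ Real.exp (((K:ℝ)+1) * u) := by
        apply Real.exp_le_exp.mpr; nlinarith
      linarith
    refine le_trans hle (le_of_eq ?_)
    rw [show ((K:ℝ)+1) = ((K+1 : ℕ) : ℝ) by push_cast; ring, Real.exp_nat_mul, Real.exp_log ht0]
  -- final chain
  have hone : (1:ℝ) = |Q.eval x| := by rw [hQx]; norm_num
  have hle1 : |Q.eval x| ≤ ∑ j ∈ s, |Q.eval (v j)| * |(Lagrange.basis s v j).eval x| := by
    rw [hsum]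
    refine le_trans (Finset.abs_sum_le_sum_abs _ _) (le_of_eq ?_)
    exact Finset.sum_congr rfl fun j hj => abs_mul _ _
  have hlt : ∑ j ∈ s, |Q.eval (v j)| * |(Lagrange.basis s v j).eval x|
      < ∑ j ∈ s, (1 / t ^ (K+1)) * |(Lagrange.basis s v j).eval x| := by
    apply Finset.sum_lt_sum_of_nonempty hsne
    intro j hj
    exact mul_lt_mul_of_pos_right (hQb j hj) (abs_pos.mpr (hsign j hj).2)
  have hfin : ∑ j ∈ s, (1 / t ^ (K+1)) * |(Lagrange.basis s v j).eval x| ≤ 1 := by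
    rw [← Finset.mul_sum, hsumabs]
    calc (1 / t ^ (K+1)) * (Polynomial.Chebyshev.T ℝ ((K+1 : ℕ) : ℤ)).eval x
        ≤ (1 / t ^ (K+1)) * t ^ (K+1) := by
          apply mul_le_mul_of_nonneg_left hcosh
          positivity
      _ = 1 := by field_simp
  linarith
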